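/- arXiv:2309.12268 — 2 statements merged into one kernel-verified Lean document; each statement's English description precedes it below -/
import Mathlib

section
/- For 0 < β < 1, the function v_β(r) = -r·((ln β)/π)·sin(π·(ln r)/(ln β)) is positive on the annulus {β < r < 1} and satisfies the equation v·Δv = |∇v|² - 1 on the annulus B_1 \ closure(B_β) ⊂ ℝ² (with v viewed as a radial function v(x) = v_β(|x|)), with v = 0 on both boundary circles |x| = β and |x| = 1. -/
/-!
For a radial function `v x = f ‖x‖` in the plane, `Δv = f'' + f'/r` and `|∇v|² = f'²`, so the
equation `v Δv = |∇v|² - 1` reduces to the ODE `f (f'' + f'/r) = f'² - 1`. With `c = log β / π`,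
the profile `f r = -c r sin (log r / c)` satisfies `f' = -c sin θ - cos θ` and
`f'' = (sin θ / c - cos θ) / r` for `θ = log r / c`, and the ODE becomes `sin² θ + cos² θ = 1`.
The profile vanishes at `r = 1` and `r = exp (π c) = β`, and is positive in between because there
`θ ∈ (0, π)`.
-/

/-- The Euclidean Laplacian on ℝ² ≅ ℂ. -/
noncomputable def lap (u : ℂ → ℝ) (z : ℂ) : ℝ :=
  fderiv ℝ (fun w => fderiv ℝ u w 1) z 1 +
  fderiv ℝ (fun w => fderiv ℝ u w Complex.I) z Complex.I

open Real Filter Topology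
open scoped RealInnerProductSpace

section RadialFunction

variable {F : Type*} [NormedAddCommGroup F] [InnerProductSpace ℝ F]

theorem hasFDerivAt_norm_of_ne_zero {x : F} (hx : x ≠ 0) :
    HasFDerivAt (‖·‖) (‖x‖⁻¹ • innerSL ℝ x) x := by
  have hsq : ‖x‖ ^ 2 ≠ 0 := by positivity
  have h := (hasDerivAt_sqrt hsq).comp_hasFDerivAt x (hasStrictFDerivAt_norm_sq x).hasFDerivAt
  simp only [Function.comp_def, sqrt_sq (norm_nonneg _)] at h
  refine h.congr_fderiv (ContinuousLinearMap.ext fun y => ?_)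
  simp only [one_div, mul_inv_rev, smul_apply, coe_innerSL_apply, nsmul_eq_mul, Nat.cast_ofNat,
    smul_eq_mul]
  field_simp

theorem HasDerivAt.hasFDerivAt_comp_norm {f : ℝ → ℝ} {f' : ℝ} {x : F} (hx : x ≠ 0)
    (hf : HasDerivAt f f' ‖x‖) :
    HasFDerivAt (fun w => f ‖w‖) ((f' / ‖x‖) • innerSL ℝ x) x := by
  have h := hf.comp_hasFDerivAt x (hasFDerivAt_norm_of_ne_zero hx)
  rwa [smul_smul, ← div_eq_mul_inv] at h

theorem fderiv_comp_norm_apply {f : ℝ → ℝ} {f' : ℝ} {x : F} (hx : x ≠ 0)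
    (hf : HasDerivAt f f' ‖x‖) (h : F) :
    fderiv ℝ (fun w => f ‖w‖) x h = f' / ‖x‖ * ⟪x, h⟫ := by
  simp [(hf.hasFDerivAt_comp_norm hx).fderiv]

theorem fderiv_fderiv_comp_norm_apply {f f' : ℝ → ℝ} {f'' : ℝ} {x : F} (hx : x ≠ 0)
    (hf : ∀ᶠ t in 𝓝 ‖x‖, HasDerivAt f (f' t) t) (hf' : HasDerivAt f' f'' ‖x‖) (h : F) :
    fderiv ℝ (fun w => fderiv ℝ (fun w => f ‖w‖) w h) x h =
      f' ‖x‖ / ‖x‖ * ‖h‖ ^ 2 + (f'' - f' ‖x‖ / ‖x‖) / ‖x‖ ^ 2 * ⟪x, h⟫ ^ 2 := by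
  have hr : ‖x‖ ≠ 0 := norm_ne_zero_iff.mpr hx
  have hpartial : (fun w => fderiv ℝ (fun w => f ‖w‖) w h) =ᶠ[𝓝 x]
      fun w => f' ‖w‖ / ‖w‖ * ⟪w, h⟫ := by
    filter_upwards [continuous_norm.continuousAt.eventually hf, eventually_ne_nhds hx]
      with w hfw hw
    exact fderiv_comp_norm_apply hw hfw h
  have hquot : HasDerivAt (fun t => f' t / t) ((f'' * ‖x‖ - f' ‖x‖ * 1) / ‖x‖ ^ 2) ‖x‖ :=
    hf'.div (hasDerivAt_id _) hr
  have hinner : HasFDerivAt (fun w => ⟪w, h⟫) (innerSL ℝ h) x := by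
    have heq : (fun w => ⟪w, h⟫) = innerSL ℝ h := funext fun w => real_inner_comm h w
    exact heq ▸ (innerSL ℝ h).hasFDerivAt
  have hG : HasFDerivAt (fun w => f' ‖w‖ / ‖w‖ * ⟪w, h⟫) _ x :=
    (hquot.hasFDerivAt_comp_norm hx).mul hinner
  rw [hpartial.fderiv_eq, hG.fderiv]
  simp only [add_apply, smul_apply, innerSL_apply_apply, real_inner_self_eq_norm_sq, smul_eq_mul]
  field_simp

end RadialFunction

theorem lap_comp_norm {f f' : ℝ → ℝ} {f'' : ℝ} {x : ℂ} (hx : x ≠ 0)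
    (hf : ∀ᶠ t in 𝓝 ‖x‖, HasDerivAt f (f' t) t) (hf' : HasDerivAt f' f'' ‖x‖) :
    lap (fun w => f ‖w‖) x = f'' + f' ‖x‖ / ‖x‖ := by
  have hr : ‖x‖ ≠ 0 := norm_ne_zero_iff.mpr hx
  have hnorm : x.re ^ 2 + x.im ^ 2 = ‖x‖ ^ 2 := by
    rw [Complex.sq_norm, Complex.normSq_apply]; ring
  rw [lap, fderiv_fderiv_comp_norm_apply hx hf hf', fderiv_fderiv_comp_norm_apply hx hf hf']
  simp only [Complex.inner, norm_one, Complex.norm_I, one_pow, mul_one, one_mul,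
    Complex.mul_re, Complex.I_re, Complex.I_im, Complex.conj_re, Complex.conj_im]
  field_simp
  linear_combination (f'' * ‖x‖ - f' ‖x‖) * hnorm

theorem fderiv_comp_norm_one_sq_add_I_sq {f : ℝ → ℝ} {f' : ℝ} {x : ℂ} (hx : x ≠ 0)
    (hf : HasDerivAt f f' ‖x‖) :
    fderiv ℝ (fun w => f ‖w‖) x 1 ^ 2 + fderiv ℝ (fun w => f ‖w‖) x Complex.I ^ 2 = f' ^ 2 := by
  have hr : ‖x‖ ≠ 0 := norm_ne_zero_iff.mpr hx
  have hnorm : x.re ^ 2 + x.im ^ 2 = ‖x‖ ^ 2 := by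
    rw [Complex.sq_norm, Complex.normSq_apply]; ring
  rw [fderiv_comp_norm_apply hx hf, fderiv_comp_norm_apply hx hf]
  simp only [Complex.inner, one_mul, Complex.mul_re, Complex.I_re, Complex.I_im, Complex.conj_re,
    Complex.conj_im]
  field_simp
  linear_combination f' ^ 2 * hnorm

section LogSineProfile

variable {c r : ℝ}

noncomputable def logSineProfile (c t : ℝ) : ℝ := -t * c * sin (log t / c)

noncomputable def logSineProfileDeriv (c t : ℝ) : ℝ := -(c * sin (log t / c)) - cos (log t / c)

theorem hasDerivAt_logSineProfile (hc : c ≠ 0) (hr : r ≠ 0) :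
    HasDerivAt (logSineProfile c) (logSineProfileDeriv c r) r := by
  have hsin := ((hasDerivAt_log hr).div_const c).sin
  refine (((hasDerivAt_id r).neg.mul_const c).mul hsin).congr_deriv ?_
  simp only [logSineProfileDeriv, Pi.neg_apply, id]
  field_simp
  ring

theorem hasDerivAt_logSineProfileDeriv (hc : c ≠ 0) (hr : r ≠ 0) :
    HasDerivAt (logSineProfileDeriv c) ((sin (log r / c) / c - cos (log r / c)) / r) r := by
  have hlog := (hasDerivAt_log hr).div_const c
  refine ((hlog.sin.const_mul c).neg.sub hlog.cos).congr_deriv ?_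
  field_simp
  ring

theorem logSineProfile_ode (hc : c ≠ 0) (hr : r ≠ 0) :
    logSineProfile c r *
        ((sin (log r / c) / c - cos (log r / c)) / r + logSineProfileDeriv c r / r) =
      logSineProfileDeriv c r ^ 2 - 1 := by
  simp only [logSineProfile, logSineProfileDeriv]
  field_simp
  linear_combination -sin_sq_add_cos_sq (log r / c)

theorem logSineProfile_one (c : ℝ) : logSineProfile c 1 = 0 := by
  simp [logSineProfile]

theorem logSineProfile_exp_pi_mul (hc : c ≠ 0) : logSineProfile c (exp (π * c)) = 0 := by
  simp [logSineProfile, mul_div_cancel_right₀ _ hc]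

theorem logSineProfile_pos (hc : c < 0) (hr : r ∈ Set.Ioo (exp (π * c)) 1) :
    0 < logSineProfile c r := by
  obtain ⟨hlo, hhi⟩ := hr
  have hr0 : 0 < r := (exp_pos _).trans hlo
  have hlog_lo : π * c < log r := (lt_log_iff_exp_lt hr0).mpr hlo
  have hlog_hi : log r < 0 := log_neg hr0 hhi
  have hsin : 0 < sin (log r / c) := by
    refine sin_pos_of_pos_of_lt_pi (div_pos_of_neg_of_neg hlog_hi hc) ?_
    rwa [div_lt_iff_of_neg hc]
  have hrc : 0 < -r * c := mul_pos_of_neg_of_neg (neg_neg_of_pos hr0) hc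
  exact mul_pos hrc hsin

end LogSineProfile

theorem stmt1 (β : ℝ) (hβ : 0 < β) (hβ1 : β < 1)
    (vβ : ℝ → ℝ)
    (hvβ : ∀ r : ℝ,
      vβ r = -r * (Real.log β / Real.pi) * Real.sin (Real.pi * Real.log r / Real.log β))
    (v : ℂ → ℝ) (hv : ∀ x : ℂ, v x = vβ ‖x‖) :
    (∀ r ∈ Set.Ioo β 1, 0 < vβ r) ∧
    (∀ x : ℂ, β < ‖x‖ → ‖x‖ < 1 →
      v x * lap v x = (fderiv ℝ v x 1) ^ 2 + (fderiv ℝ v x Complex.I) ^ 2 - 1) ∧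
    vβ β = 0 ∧ vβ 1 = 0 := by
  set c := log β / π
  have hc : c < 0 := div_neg_of_neg_of_pos (log_neg hβ hβ1) pi_pos
  have hβc : exp (π * c) = β := by rw [mul_div_cancel₀ _ pi_ne_zero, exp_log hβ]
  have hvβc : vβ = logSineProfile c := by
    funext r
    rw [hvβ, logSineProfile, div_div_eq_mul_div, mul_comm (log r)]
  have hvc : v = fun w => logSineProfile c ‖w‖ := by
    funext w
    rw [hv, hvβc]
  rw [hvβc, ← hβc]
  refine ⟨fun r hr => logSineProfile_pos hc hr, fun x hβx _ => ?_,
    logSineProfile_exp_pi_mul hc.ne, logSineProfile_one c⟩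
  have hr : ‖x‖ ≠ 0 := ((exp_pos _).trans hβx).ne'
  have hx : x ≠ 0 := norm_ne_zero_iff.mp hr
  have hderiv : ∀ᶠ t in 𝓝 ‖x‖, HasDerivAt (logSineProfile c) (logSineProfileDeriv c t) t :=
    (eventually_ne_nhds hr).mono fun t ht => hasDerivAt_logSineProfile hc.ne ht
  rw [hvc, lap_comp_norm hx hderiv (hasDerivAt_logSineProfileDeriv hc.ne hr),
    fderiv_comp_norm_one_sq_add_I_sq hx (hasDerivAt_logSineProfile hc.ne hr)]
  exact logSineProfile_ode hc.ne hr
end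

section
/- Let Ω ⊂ ℝ² be a bounded domain and let u₁, u₂ be C² functions on Ω with u₁, u₂ ≥ 2·log 2 satisfying Δu_i = C·e^{2u_i} for a constant C > 0. Fix s ∈ (1/2, 1). If s·u₁ - u₂ attains a positive interior maximum at some point x₀ ∈ Ω, then a contradiction arises: 0 ≥ Δ(s·u₁ - u₂)(x₀) = C(s·e^{2u₁(x₀)} - e^{2u₂(x₀)}) > 0. -/
/-!
At an interior maximum of `s * u₁ - u₂` the second derivatives along the two coordinate
directions are nonpositive, so `s * Δu₁ ≤ Δu₂` there, i.e. `s * e^{2u₁} ≤ e^{2u₂}` at `x₀`.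
But `u₂ < s * u₁` at `x₀`, and `u₁ ≥ 2 log 2` gives `e^{2su₁} ≤ s * e^{2u₁}`, so
`e^{2u₂} < s * e^{2u₁}`.
-/

open Real Filter Topology

/-- If `deriv (deriv g) a > 0`, the second derivative test makes `a` also a local minimum, so `g`
is locally constant near `a`. -/
theorem IsLocalMax.deriv_deriv_nonpos {g : ℝ → ℝ} {a : ℝ} (h : IsLocalMax g a)
    (hc : ContinuousAt g a) : deriv (deriv g) a ≤ 0 := by
  by_contra! hpos
  have hmin : IsLocalMin g a := isLocalMin_of_deriv_deriv_pos hpos h.deriv_eq_zero hc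
  have hconst : g =ᶠ[𝓝 a] fun _ => g a :=
    (h.and hmin).mono fun _ hx => le_antisymm hx.1 hx.2
  have hderiv : deriv g =ᶠ[𝓝 a] fun _ => 0 := hconst.deriv.trans (by simp)
  rw [hderiv.deriv_eq, deriv_const] at hpos
  exact hpos.false

section SecondDirectionalDerivative

variable {E : Type*} [NormedAddCommGroup E] [NormedSpace ℝ E] {f g : E → ℝ} {x : E}

theorem ContDiffAt.differentiableAt_fderiv_apply (hf : ContDiffAt ℝ 2 f x) (v : E) :
    DifferentiableAt ℝ (fun y => fderiv ℝ f y v) x :=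
  ((hf.fderiv_right (m := 1) le_rfl).differentiableAt one_ne_zero).clm_apply
    (differentiableAt_const v)

theorem IsLocalMax.fderiv_fderiv_apply_nonpos (h : IsLocalMax f x) (hf : ContDiffAt ℝ 2 f x)
    (v : E) : fderiv ℝ (fun y => fderiv ℝ f y v) x v ≤ 0 := by
  have hline : ∀ t : ℝ, HasDerivAt (fun t : ℝ => x + t • v) v t := fun t => by
    simpa using ((hasDerivAt_id t).smul_const v).const_add x
  have hline0 : Tendsto (fun t : ℝ => x + t • v) (𝓝 0) (𝓝 x) := by
    simpa using (hline 0).continuousAt.tendsto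
  have hmax : IsLocalMax (f ∘ fun t : ℝ => x + t • v) 0 :=
    IsLocalMax.comp_continuous (by simpa using h) (hline 0).continuousAt
  have hderiv : deriv (fun t : ℝ => f (x + t • v)) =ᶠ[𝓝 0]
      fun t => fderiv ℝ f (x + t • v) v := by
    filter_upwards [hline0.eventually (hf.eventually (by simp))] with t ht
    exact ((ht.differentiableAt two_ne_zero).hasFDerivAt.comp_hasDerivAt t (hline t)).deriv
  have hsecond : HasDerivAt (fun t : ℝ => fderiv ℝ f (x + t • v) v)
      (fderiv ℝ (fun y => fderiv ℝ f y v) x v) 0 := by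
    have hx : HasFDerivAt (fun y => fderiv ℝ f y v) (fderiv ℝ (fun y => fderiv ℝ f y v) x)
        (x + (0 : ℝ) • v) := by
      rw [zero_smul, add_zero]
      exact (hf.differentiableAt_fderiv_apply v).hasFDerivAt
    exact hx.comp_hasDerivAt 0 (hline 0)
  have hcont : ContinuousAt (f ∘ fun t : ℝ => x + t • v) 0 :=
    hf.continuousAt.comp_of_eq (hline 0).continuousAt (by simp)
  rw [← hsecond.deriv, ← hderiv.deriv_eq]
  exact hmax.deriv_deriv_nonpos hcont

theorem fderiv_fderiv_apply_sub (hf : ContDiffAt ℝ 2 f x) (hg : ContDiffAt ℝ 2 g x) (v w : E) :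
    fderiv ℝ (fun y => fderiv ℝ (fun z => f z - g z) y v) x w =
      fderiv ℝ (fun y => fderiv ℝ f y v) x w - fderiv ℝ (fun y => fderiv ℝ g y v) x w := by
  have hfirst : (fun y => fderiv ℝ (fun z => f z - g z) y v) =ᶠ[𝓝 x]
      fun y => fderiv ℝ f y v - fderiv ℝ g y v := by
    filter_upwards [hf.eventually (by simp), hg.eventually (by simp)] with y hfy hgy
    rw [fderiv_fun_sub (hfy.differentiableAt two_ne_zero) (hgy.differentiableAt two_ne_zero)]
    rfl
  rw [hfirst.fderiv_eq, fderiv_fun_sub (hf.differentiableAt_fderiv_apply v)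
    (hg.differentiableAt_fderiv_apply v)]
  rfl

theorem fderiv_fderiv_apply_const_mul (c : ℝ) (hf : ContDiffAt ℝ 2 f x) (v w : E) :
    fderiv ℝ (fun y => fderiv ℝ (fun z => c * f z) y v) x w =
      c * fderiv ℝ (fun y => fderiv ℝ f y v) x w := by
  have hfirst : (fun y => fderiv ℝ (fun z => c * f z) y v) =ᶠ[𝓝 x]
      fun y => c * fderiv ℝ f y v := by
    filter_upwards [hf.eventually (by simp)] with y hfy
    rw [fderiv_const_mul (hfy.differentiableAt two_ne_zero)]
    rfl
  rw [hfirst.fderiv_eq, fderiv_const_mul (hf.differentiableAt_fderiv_apply v)]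
  rfl

end SecondDirectionalDerivative

section Laplacian

variable {u v : ℂ → ℝ} {z : ℂ}

theorem lap_sub (hu : ContDiffAt ℝ 2 u z) (hv : ContDiffAt ℝ 2 v z) :
    lap (fun w => u w - v w) z = lap u z - lap v z := by
  simp only [lap, fderiv_fderiv_apply_sub hu hv]
  ring

theorem lap_const_mul (c : ℝ) (hu : ContDiffAt ℝ 2 u z) :
    lap (fun w => c * u w) z = c * lap u z := by
  simp only [lap, fderiv_fderiv_apply_const_mul c hu]
  ring

theorem IsLocalMax.lap_nonpos (h : IsLocalMax u z) (hu : ContDiffAt ℝ 2 u z) : lap u z ≤ 0 :=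
  add_nonpos (h.fderiv_fderiv_apply_nonpos hu 1) (h.fderiv_fderiv_apply_nonpos hu Complex.I)

end Laplacian

/-- From `log s ≥ 1 - 1 / s`: then `s * exp t ≥ exp (t + 1 - 1 / s) ≥ exp (s * t)`,
the last step being `(1 - s) * (t - 1 / s) ≥ 0`. -/
theorem Real.exp_mul_le_mul_exp {s t : ℝ} (hs : 0 < s) (hs1 : s ≤ 1) (hst : 1 ≤ s * t) :
    exp (s * t) ≤ s * exp t := by
  have hlog : 1 - s⁻¹ ≤ log s := by
    have := log_le_sub_one_of_pos (inv_pos.2 hs)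
    rw [log_inv] at this
    linarith
  have hexp : s * t ≤ log s + t := by
    have ht : s⁻¹ ≤ t := (inv_le_iff_one_le_mul₀' hs).2 hst
    nlinarith [mul_nonneg (sub_nonneg.2 hs1) (sub_nonneg.2 ht), mul_inv_cancel₀ hs.ne']
  calc exp (s * t) ≤ exp (log s + t) := exp_le_exp.2 hexp
    _ = s * exp t := by rw [exp_add, exp_log hs]

theorem stmt14_general (Ω : Set ℂ) (hΩo : IsOpen Ω)
    (u₁ u₂ : ℂ → ℝ) (h1 : ContDiffOn ℝ 2 u₁ Ω) (h2 : ContDiffOn ℝ 2 u₂ Ω)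
    (hb1 : ∀ x ∈ Ω, 2 * Real.log 2 ≤ u₁ x)
    (C : ℝ) (hC : 0 < C)
    (he1 : ∀ x ∈ Ω, lap u₁ x = C * Real.exp (2 * u₁ x))
    (he2 : ∀ x ∈ Ω, lap u₂ x = C * Real.exp (2 * u₂ x))
    (s : ℝ) (hs : 1 / 2 < s) (hs1 : s < 1)
    (x₀ : ℂ) (hx₀ : x₀ ∈ Ω)
    (hmax : IsMaxOn (fun x => s * u₁ x - u₂ x) Ω x₀)
    (hpos : 0 < s * u₁ x₀ - u₂ x₀) : False := by
  have hΩ : Ω ∈ 𝓝 x₀ := hΩo.mem_nhds hx₀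
  have hu₁ : ContDiffAt ℝ 2 u₁ x₀ := h1.contDiffAt hΩ
  have hu₂ : ContDiffAt ℝ 2 u₂ x₀ := h2.contDiffAt hΩ
  have hlap : s * lap u₁ x₀ - lap u₂ x₀ ≤ 0 := by
    rw [← lap_const_mul s hu₁, ← lap_sub (contDiffAt_const.mul hu₁) hu₂]
    exact (hmax.isLocalMax hΩ).lap_nonpos ((contDiffAt_const.mul hu₁).sub hu₂)
  have hst : 1 ≤ s * (2 * u₁ x₀) := by
    have := hb1 x₀ hx₀
    nlinarith [Real.log_two_gt_d9]
  have hexp : exp (2 * u₂ x₀) < s * exp (2 * u₁ x₀) :=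
    calc exp (2 * u₂ x₀) < exp (s * (2 * u₁ x₀)) := exp_lt_exp.2 (by linarith)
      _ ≤ s * exp (2 * u₁ x₀) := exp_mul_le_mul_exp (by linarith) hs1.le hst
  rw [he1 x₀ hx₀, he2 x₀ hx₀] at hlap
  linarith [mul_lt_mul_of_pos_left hexp hC]

theorem stmt14 (Ω : Set ℂ) (hΩo : IsOpen Ω) (hΩb : Bornology.IsBounded Ω)
    (u₁ u₂ : ℂ → ℝ) (h1 : ContDiffOn ℝ 2 u₁ Ω) (h2 : ContDiffOn ℝ 2 u₂ Ω)
    (hb1 : ∀ x ∈ Ω, 2 * Real.log 2 ≤ u₁ x) (hb2 : ∀ x ∈ Ω, 2 * Real.log 2 ≤ u₂ x)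
    (C : ℝ) (hC : 0 < C)
    (he1 : ∀ x ∈ Ω, lap u₁ x = C * Real.exp (2 * u₁ x))
    (he2 : ∀ x ∈ Ω, lap u₂ x = C * Real.exp (2 * u₂ x))
    (s : ℝ) (hs : 1 / 2 < s) (hs1 : s < 1)
    (x₀ : ℂ) (hx₀ : x₀ ∈ Ω)
    (hmax : IsMaxOn (fun x => s * u₁ x - u₂ x) Ω x₀)
    (hpos : 0 < s * u₁ x₀ - u₂ x₀) : False :=
  stmt14_general Ω hΩo u₁ u₂ h1 h2 hb1 C hC he1 he2 s hs hs1 x₀ hx₀ hmax hpos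
end
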